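/- arXiv:1704.03622 — 5 statements merged into one kernel-verified Lean document; each statement's English description precedes it below -/
import Mathlib

section
/- Let a = [a_1,...,a_r] and b = [a_{r+1},...,a_s] be finite continued fractions with positive integer partial quotients, and let I_a, I_b, I_{a,b} denote the cf-ary intervals determined by the digit sequences (a_1,...,a_r), (a_{r+1},...,a_s), and their concatenation (a_1,...,a_s) respectively. Then |I_b|/2 ≤ |I_{a,b}|/|I_a| ≤ 2|I_b|, where |·| denotes Lebesgue measure (interval length). -/
open MeasureTheory

/-- The continuant of a finite list of partial quotients: for `[a₁,...,aₙ]` it equals `qₙ`,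
where `q₋₁ = 0`, `q₀ = 1`, `qₙ = aₙ qₙ₋₁ + qₙ₋₂`. -/
def contK : List ℕ → ℕ
  | [] => 1
  | [a] => a
  | a :: b :: l => a * contK (b :: l) + contK l

/-- The value of the finite continued fraction `[a₁,...,aₙ] = 1/(a₁ + 1/(a₂ + ⋯ + 1/aₙ))`. -/
noncomputable def cfVal : List ℕ → ℝ
  | [] => 0
  | a :: l => 1 / (a + cfVal l)

/-- The list with its last entry incremented by one. -/
def succLast : List ℕ → List ℕ
  | [] => []
  | [a] => [a + 1]
  | a :: b :: l => a :: succLast (b :: l)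

/-- The cf-ary interval `I_{[a₁,...,aₙ]}`: the open interval with endpoints
`[a₁,...,aₙ]` and `[a₁,...,aₙ+1]`, i.e. the set of numbers whose continued fraction
expansion begins with `a₁,...,aₙ`. -/
noncomputable def cfInterval (u : List ℕ) : Set ℝ :=
  Set.Ioo (min (cfVal u) (cfVal (succLast u))) (max (cfVal u) (cfVal (succLast u)))

/-! Write `q l = contK l`, `l⁻` for `l` without its last digit and `ˢl` for `succLast l`.
The endpoints of `I_l` are `q l.tail / q l` and `q (ˢl).tail / q ˢl`, whose cross determinant
is `±1`, so `|I_l| = 1 / (q l * q ˢl)` with `q ˢl = q l + q l⁻`. Continuants of a concatenation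
split as `q (u ++ w) = q u * q w + q u⁻ * q w.tail`, and likewise with `ˢw` for `w`, because
`ˢ(u ++ w) = u ++ ˢw`. Dropping the first or last digit does not increase a continuant, so
`x = q u⁻ / q u`, `y = q w.tail / q w` and `z = q (ˢw).tail / q ˢw` lie in `[0, 1]`, and
`|I_(u ++ w)| / (|I_u| |I_w|) = (1 + x) / ((1 + x y) (1 + x z))` lies in `[1/2, 2]`. -/

lemma contK_cons_cons (a b : ℕ) (l : List ℕ) :
    contK (a :: b :: l) = a * contK (b :: l) + contK l := rfl

lemma contK_cons (a : ℕ) {v : List ℕ} (hv : v ≠ []) :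
    contK (a :: v) = a * contK v + contK v.tail := by
  cases v with
  | nil => exact absurd rfl hv
  | cons b t => rfl

lemma contK_pos : ∀ {l : List ℕ}, (∀ x ∈ l, 0 < x) → 0 < contK l
  | [], _ => Nat.one_pos
  | [a], h => h a (by simp)
  | a :: b :: t, h => by
      rw [contK_cons_cons]
      exact Nat.add_pos_left (Nat.mul_pos (h a (by simp))
        (contK_pos fun x hx => h x (List.mem_cons_of_mem a hx))) _

lemma contK_tail_le {l : List ℕ} (h : ∀ x ∈ l, 0 < x) : contK l.tail ≤ contK l := by
  match l, h with
  | [], _ => rfl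
  | [a], h => exact h a (by simp)
  | a :: b :: t, h =>
      have ha : 1 ≤ a := h a (by simp)
      calc contK (b :: t) ≤ a * contK (b :: t) := Nat.le_mul_of_pos_left _ ha
        _ ≤ a * contK (b :: t) + contK t := Nat.le_add_right _ _

lemma contK_append {w : List ℕ} (hw : w ≠ []) : ∀ {u : List ℕ}, u ≠ [] →
    contK (u ++ w) = contK u * contK w + contK u.dropLast * contK w.tail
  | [a], _ => by simp [contK_cons a hw, contK]
  | [a, b], _ => by
      simp only [List.cons_append, List.nil_append, contK_cons_cons, contK_cons b hw]
      simp [contK]; ring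
  | a :: b :: c :: s, _ => by
      have h₁ := contK_append hw (u := b :: c :: s) (by simp)
      have h₂ := contK_append hw (u := c :: s) (by simp)
      simp only [List.cons_append, List.dropLast_cons_cons] at h₁ h₂ ⊢
      rw [contK_cons_cons a b (c :: (s ++ w)), h₁, h₂, contK_cons_cons a b (c :: s),
        contK_cons_cons a b (c :: s).dropLast]
      ring

lemma contK_append_singleton {u : List ℕ} (hu : u ≠ []) (a : ℕ) :
    contK (u ++ [a]) = contK u * a + contK u.dropLast := by
  simp [contK_append (List.cons_ne_nil a []) hu, contK]

lemma exists_eq_append_singleton {l : List ℕ} (hl : l ≠ []) : ∃ u a, l = u ++ [a] :=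
  ⟨l.dropLast, l.getLast hl, (List.dropLast_append_getLast hl).symm⟩

lemma contK_dropLast_le {l : List ℕ} (h : ∀ x ∈ l, 0 < x) : contK l.dropLast ≤ contK l := by
  rcases eq_or_ne l [] with rfl | hl
  · rfl
  obtain ⟨u, a, rfl⟩ := exists_eq_append_singleton hl
  have ha : 1 ≤ a := h a (by simp)
  rcases eq_or_ne u [] with rfl | hu
  · exact ha
  rw [List.dropLast_concat, contK_append_singleton hu]
  nlinarith

lemma succLast_cons (a : ℕ) {v : List ℕ} (hv : v ≠ []) : succLast (a :: v) = a :: succLast v := by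
  cases v with
  | nil => exact absurd rfl hv
  | cons b t => rfl

lemma succLast_ne_nil : ∀ {l : List ℕ}, l ≠ [] → succLast l ≠ []
  | [_], _ | _ :: _ :: _, _ => List.cons_ne_nil _ _

lemma succLast_append {w : List ℕ} (hw : w ≠ []) : ∀ u : List ℕ, succLast (u ++ w) = u ++ succLast w
  | [] => rfl
  | a :: v => by
      rw [List.cons_append, succLast_cons a (List.append_ne_nil_of_right_ne_nil v hw),
        succLast_append hw v, List.cons_append]

lemma succLast_pos : ∀ {l : List ℕ}, (∀ x ∈ l, 0 < x) → ∀ x ∈ succLast l, 0 < x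
  | [], _ => by simp [succLast]
  | [a], _ => by simp [succLast]
  | a :: b :: t, h => by
      simp only [succLast, List.mem_cons, forall_eq_or_imp]
      exact ⟨h a (by simp), succLast_pos (l := b :: t) (fun x hx => h x (by simp [hx]))⟩

lemma contK_succLast {l : List ℕ} (hl : l ≠ []) :
    contK (succLast l) = contK l + contK l.dropLast := by
  obtain ⟨u, a, rfl⟩ := exists_eq_append_singleton hl
  rcases eq_or_ne u [] with rfl | hu
  · simp [succLast, contK]
  rw [succLast_append (List.cons_ne_nil a []), show succLast [a] = [a + 1] from rfl,
    contK_append_singleton hu, contK_append_singleton hu, List.dropLast_concat]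
  ring

lemma cfVal_eq_div : ∀ {l : List ℕ}, (∀ x ∈ l, 0 < x) → l ≠ [] →
    cfVal l = contK l.tail / contK l
  | [a], _, _ => by simp [cfVal, contK]
  | a :: b :: t, h, _ => by
      have hbt : ∀ x ∈ b :: t, 0 < x := fun x hx => h x (by simp [hx])
      have hK : (0 : ℝ) < contK (b :: t) := by exact_mod_cast contK_pos hbt
      rw [cfVal, cfVal_eq_div hbt (List.cons_ne_nil b t), List.tail_cons, List.tail_cons,
        contK_cons_cons]
      push_cast
      field_simp

lemma contK_succLast_det : ∀ {l : List ℕ}, l ≠ [] →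
    (contK (succLast l).tail * contK l : ℤ) - contK l.tail * contK (succLast l) =
      (-1) ^ l.length
  | [a], _ => by simp [succLast, contK]
  | a :: b :: t, _ => by
      have hbt : b :: t ≠ [] := List.cons_ne_nil b t
      have ih := contK_succLast_det hbt
      rw [succLast_cons a hbt, contK_cons a (succLast_ne_nil hbt), contK_cons_cons,
        List.tail_cons, List.tail_cons, List.length_cons, pow_succ, ← ih,
        List.tail_cons]
      push_cast
      ring

def cfDenom (l : List ℕ) : ℕ := contK l * contK (succLast l)

lemma volume_cfInterval {l : List ℕ} (h : ∀ x ∈ l, 0 < x) (hl : l ≠ []) :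
    (volume (cfInterval l)).toReal = (cfDenom l : ℝ)⁻¹ := by
  have hK : (0 : ℝ) < contK l := by exact_mod_cast contK_pos h
  have hK' : (0 : ℝ) < contK (succLast l) := by exact_mod_cast contK_pos (succLast_pos h)
  have hdet : (contK (succLast l).tail * contK l : ℝ) - contK l.tail * contK (succLast l) =
      (-1) ^ l.length := by exact_mod_cast contK_succLast_det hl
  have hdiff : cfVal (succLast l) - cfVal l =
      (-1) ^ l.length / (contK l * contK (succLast l)) := by
    rw [cfVal_eq_div h hl, cfVal_eq_div (succLast_pos h) (succLast_ne_nil hl), ← hdet]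
    field_simp
  rw [cfInterval, Real.volume_Ioo, max_sub_min_eq_abs, hdiff, abs_div, abs_pow, abs_neg,
    abs_one, one_pow, abs_of_pos (by positivity), ENNReal.toReal_ofReal (by positivity)]
  push_cast [cfDenom]
  rw [one_div]

lemma cfDenom_pos {l : List ℕ} (h : ∀ x ∈ l, 0 < x) : 0 < cfDenom l :=
  Nat.mul_pos (contK_pos h) (contK_pos (succLast_pos h))

section Append

variable {u w : List ℕ}

lemma contK_succLast_append (hun : u ≠ []) (hwn : w ≠ []) :
    contK (succLast (u ++ w)) =
      contK u * contK (succLast w) + contK u.dropLast * contK (succLast w).tail := by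
  rw [succLast_append hwn, contK_append (succLast_ne_nil hwn) hun]

lemma cfDenom_append_le (hu : ∀ x ∈ u, 0 < x) (hw : ∀ x ∈ w, 0 < x) (hun : u ≠ [])
    (hwn : w ≠ []) : cfDenom (u ++ w) ≤ 2 * cfDenom u * cfDenom w := by
  have hA := contK_dropLast_le hu
  have hB := contK_tail_le hw
  have hB' := contK_tail_le (succLast_pos hw)
  unfold cfDenom
  rw [contK_append hwn hun, contK_succLast_append hun hwn, contK_succLast hun]
  set A' := contK u.dropLast
  calc (contK u * contK w + A' * contK w.tail) *
        (contK u * contK (succLast w) + A' * contK (succLast w).tail)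
      ≤ (contK u * contK w + A' * contK w) *
          (contK u * contK (succLast w) + A' * contK (succLast w)) := by gcongr
    _ = (contK u + A') * (contK u + A') * (contK w * contK (succLast w)) := by ring
    _ ≤ (contK u + contK u) * (contK u + A') * (contK w * contK (succLast w)) := by gcongr
    _ = 2 * (contK u * (contK u + A')) * (contK w * contK (succLast w)) := by ring

lemma cfDenom_mul_le_append (hu : ∀ x ∈ u, 0 < x) (hun : u ≠ []) (hwn : w ≠ []) :
    cfDenom u * cfDenom w ≤ 2 * cfDenom (u ++ w) := by
  have hA := contK_dropLast_le hu
  unfold cfDenom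
  rw [contK_append hwn hun, contK_succLast_append hun hwn, contK_succLast hun]
  set A' := contK u.dropLast
  calc contK u * (contK u + A') * (contK w * contK (succLast w))
      ≤ contK u * (contK u + contK u) * (contK w * contK (succLast w)) := by gcongr
    _ = 2 * (contK u * contK w * (contK u * contK (succLast w))) := by ring
    _ ≤ 2 * ((contK u * contK w + A' * contK w.tail) *
          (contK u * contK (succLast w) + A' * contK (succLast w).tail)) := by
      gcongr <;> exact Nat.le_add_right _ _

end Append

lemma inv_div_inv_bounds {a b m : ℝ} (hb : 0 < b) (hm : 0 < m)
    (hle : m ≤ 2 * a * b) (hge : a * b ≤ 2 * m) :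
    b⁻¹ / 2 ≤ m⁻¹ / a⁻¹ ∧ m⁻¹ / a⁻¹ ≤ 2 * b⁻¹ := by
  rw [inv_div_inv, ← one_div, div_div, mul_one_div, div_le_div_iff₀ (by positivity) hm,
    div_le_div_iff₀ hm hb]
  constructor <;> linarith

theorem cf_interval_relative_length (u w : List ℕ)
    (hu : ∀ x ∈ u, 0 < x) (hw : ∀ x ∈ w, 0 < x)
    (hun : u ≠ []) (hwn : w ≠ []) :
    (volume (cfInterval w)).toReal / 2 ≤
        (volume (cfInterval (u ++ w))).toReal / (volume (cfInterval u)).toReal ∧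
      (volume (cfInterval (u ++ w))).toReal / (volume (cfInterval u)).toReal ≤
        2 * (volume (cfInterval w)).toReal := by
  have huw : ∀ x ∈ u ++ w, 0 < x := List.forall_mem_append.2 ⟨hu, hw⟩
  rw [volume_cfInterval hu hun, volume_cfInterval hw hwn,
    volume_cfInterval huw (List.append_ne_nil_of_left_ne_nil hun w)]
  apply inv_div_inv_bounds
  · exact_mod_cast cfDenom_pos hw
  · exact_mod_cast cfDenom_pos huw
  · exact_mod_cast cfDenom_append_le hu hw hun hwn
  · exact_mod_cast cfDenom_mul_le_append hu hun hwn
end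

section
/- Let u = (a_1,...,a_n) and w = (b_1,...,b_s) be finite sequences of positive integers, let v be a block of k positive integers, and let 0 < ε < 1. If the cf-discrepancy of u with respect to v satisfies D_{v,n}(u) < ε and the cf-discrepancy of w satisfies D_{v,s}(w) < ε − (k−1)/s, then the concatenation uw satisfies D_{v,n+s}(uw) < ε. -/
open MeasureTheory

/-- The Gauss measure of a set: `μ(A) = (1/log 2) ∫_A dx/(1+x)`. -/
noncomputable def gaussM (A : Set ℝ) : ℝ := (1 / Real.log 2) * ∫ x in A, 1 / (1 + x)

/-- `|x|_v`: the number of occurrences of the block `v` as a consecutive subblock of `x`,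
i.e. the number of indices `j` with `0 ≤ j ≤ |x| - |v|` such that `v` occurs in `x` at
position `j`. -/
def occCount (x v : List ℕ) : ℕ :=
  ((Finset.range (x.length + 1 - v.length)).filter
    (fun j => (x.drop j).take v.length = v)).card

/-- The cf-discrepancy of the finite sequence `x` with respect to the block `v`:
`D_{v,|x|}(x) = | |x|_v/|x| - μ(I_v) |`. -/
noncomputable def cfDisc (v x : List ℕ) : ℝ :=
  |(occCount x v : ℝ) / (x.length : ℝ) - gaussM (cfInterval v)|

/-!
An occurrence of `v` in `u ++ w` lies inside `u`, lies inside `w` (shifted by `|u|`), or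
straddles the junction, starting at one of the `|v| - 1` positions `|u| + 1 - |v|, …, |u| - 1`.
Hence `|u|_v + |w|_v ≤ |uw|_v ≤ |u|_v + |w|_v + |v| - 1`, so `||uw|_v - (n + s) μ|` is at most
`||u|_v - n μ| + ||w|_v - s μ| + (|v| - 1)`, and the margin `(|v| - 1) / s` in the hypothesis
on `w` absorbs the last term.
-/

def occPos (x v : List ℕ) : Finset ℕ :=
  (Finset.range (x.length + 1 - v.length)).filter (fun j => (x.drop j).take v.length = v)

lemma occCount_eq_card_occPos (x v : List ℕ) : occCount x v = (occPos x v).card := rfl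

lemma mem_occPos {x v : List ℕ} {j : ℕ} :
    j ∈ occPos x v ↔ j + v.length ≤ x.length ∧ (x.drop j).take v.length = v := by
  simp only [occPos, Finset.mem_filter, Finset.mem_range]
  exact and_congr_left' (by omega)

lemma take_drop_append_of_add_le {α : Type*} {u w : List α} {j k : ℕ} (h : j + k ≤ u.length) :
    ((u ++ w).drop j).take k = (u.drop j).take k := by
  rw [List.drop_append_of_le_length (by omega),
    List.take_append_of_le_length (by rw [List.length_drop]; omega)]

lemma occPos_subset_occPos_append (u w v : List ℕ) : occPos u v ⊆ occPos (u ++ w) v := by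
  intro j hj
  rw [mem_occPos] at hj ⊢
  rw [take_drop_append_of_add_le hj.1, List.length_append]
  exact ⟨by omega, hj.2⟩

lemma map_occPos_subset_occPos_append (u w v : List ℕ) :
    (occPos w v).map (addLeftEmbedding u.length) ⊆ occPos (u ++ w) v := by
  intro j hj
  obtain ⟨i, hi, rfl⟩ := Finset.mem_map.mp hj
  rw [mem_occPos] at hi ⊢
  rw [addLeftEmbedding_apply, List.drop_length_add_append, List.length_append]
  exact ⟨by omega, hi.2⟩

lemma occPos_append_subset (u w v : List ℕ) :
    occPos (u ++ w) v ⊆ occPos u v ∪ (occPos w v).map (addLeftEmbedding u.length) ∪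
      Finset.Ico (u.length + 1 - v.length) u.length := by
  intro j hj
  rw [mem_occPos, List.length_append] at hj
  simp only [Finset.mem_union, Finset.mem_Ico]
  by_cases hleft : j + v.length ≤ u.length
  · rw [take_drop_append_of_add_le hleft] at hj
    exact .inl (.inl (mem_occPos.mpr ⟨hleft, hj.2⟩))
  by_cases hright : u.length ≤ j
  · obtain ⟨i, rfl⟩ := Nat.exists_eq_add_of_le hright
    rw [List.drop_length_add_append] at hj
    exact .inl (.inr (Finset.mem_map.mpr ⟨i, mem_occPos.mpr ⟨by omega, hj.2⟩, rfl⟩))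
  exact .inr (by omega)

lemma disjoint_occPos_map_occPos {u w v : List ℕ} (hv : v ≠ []) :
    Disjoint (occPos u v) ((occPos w v).map (addLeftEmbedding u.length)) := by
  have := List.length_pos_iff.mpr hv
  refine Finset.disjoint_left.mpr fun j hj hj' => ?_
  obtain ⟨i, -, rfl⟩ := Finset.mem_map.mp hj'
  rw [mem_occPos, addLeftEmbedding_apply] at hj
  omega

lemma occCount_add_occCount_le_occCount_append {u w v : List ℕ} (hv : v ≠ []) :
    occCount u v + occCount w v ≤ occCount (u ++ w) v := by
  simp only [occCount_eq_card_occPos]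
  rw [← Finset.card_map (addLeftEmbedding u.length) (s := occPos w v),
    ← Finset.card_union_of_disjoint (disjoint_occPos_map_occPos hv)]
  exact Finset.card_le_card <| Finset.union_subset
    (occPos_subset_occPos_append u w v) (map_occPos_subset_occPos_append u w v)

lemma occCount_append_add_one_le {u w v : List ℕ} (hv : v ≠ []) :
    occCount (u ++ w) v + 1 ≤ occCount u v + occCount w v + v.length := by
  have := List.length_pos_iff.mpr hv
  have hstraddle : (Finset.Ico (u.length + 1 - v.length) u.length).card + 1 ≤ v.length := by
    rw [Nat.card_Ico]; omega
  simp only [occCount_eq_card_occPos]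
  calc (occPos (u ++ w) v).card + 1
      ≤ (occPos u v).card + ((occPos w v).map (addLeftEmbedding u.length)).card +
          (Finset.Ico (u.length + 1 - v.length) u.length).card + 1 := by
        grw [occPos_append_subset, Finset.card_union_le, Finset.card_union_le]
    _ ≤ (occPos u v).card + (occPos w v).card + v.length := by
        rw [Finset.card_map]; omega

lemma abs_div_sub_lt_iff_abs_sub_mul_lt {p N μ ε : ℝ} (hN : 0 < N) :
    |p / N - μ| < ε ↔ |p - N * μ| < N * ε := by
  rw [show p / N - μ = (p - N * μ) / N by field_simp, abs_div, abs_of_pos hN, div_lt_iff₀' hN]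

lemma abs_div_add_sub_lt {N S p q r μ ε δ : ℝ} (hN : 0 < N) (hS : 0 < S)
    (hlow : p + q ≤ r) (hup : r ≤ p + q + δ)
    (hp : |p / N - μ| < ε) (hq : |q / S - μ| < ε - δ / S) :
    |r / (N + S) - μ| < ε := by
  rw [abs_div_sub_lt_iff_abs_sub_mul_lt hN] at hp
  rw [abs_div_sub_lt_iff_abs_sub_mul_lt hS, mul_sub, mul_div_cancel₀ _ hS.ne'] at hq
  rw [abs_div_sub_lt_iff_abs_sub_mul_lt (add_pos hN hS)]
  calc |r - (N + S) * μ| = |(p - N * μ) + (q - S * μ) + (r - p - q)| := by ring_nf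
    _ ≤ |p - N * μ| + |q - S * μ| + |r - p - q| := abs_add_three _ _ _
    _ < (N + S) * ε := by rw [abs_of_nonneg (a := r - p - q) (by linarith)]; linarith

theorem cfDisc_append_general (u w v : List ℕ) (ε : ℝ)
    (hun : u ≠ []) (hwn : w ≠ []) (hvn : v ≠ [])
    (h1 : cfDisc v u < ε)
    (h2 : cfDisc v w < ε - ((v.length : ℝ) - 1) / (w.length : ℝ)) :
    cfDisc v (u ++ w) < ε := by
  have hlow : (occCount u v + occCount w v : ℝ) ≤ occCount (u ++ w) v :=
    mod_cast occCount_add_occCount_le_occCount_append hvn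
  have hup : (occCount (u ++ w) v + 1 : ℝ) ≤ occCount u v + occCount w v + v.length :=
    mod_cast occCount_append_add_one_le hvn
  unfold cfDisc at *
  rw [List.length_append, Nat.cast_add]
  exact abs_div_add_sub_lt (mod_cast List.length_pos_iff.mpr hun)
    (mod_cast List.length_pos_iff.mpr hwn) hlow (by linarith) h1 h2

theorem cfDisc_append (u w v : List ℕ) (ε : ℝ)
    (hu : ∀ x ∈ u, 0 < x) (hw : ∀ x ∈ w, 0 < x) (hv : ∀ x ∈ v, 0 < x)
    (hun : u ≠ []) (hwn : w ≠ []) (hvn : v ≠ [])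
    (hε0 : 0 < ε) (hε1 : ε < 1)
    (h1 : cfDisc v u < ε)
    (h2 : cfDisc v w < ε - ((v.length : ℝ) - 1) / (w.length : ℝ)) :
    cfDisc v (u ++ w) < ε :=
  cfDisc_append_general u w v ε hun hwn hvn h1 h2
end

section
/- Let u = (a_1,...,a_n) and w = (b_1,...,b_s) be finite sequences of positive integers, let v be a block of k positive integers, and let 0 < ε < 1. If D_{v,n}(u) < ε and s/n < ε, then: (a) for every ℓ with 1 ≤ ℓ ≤ s, the concatenation uw truncated at length n+ℓ satisfies D_{v,n+ℓ}(uw) < 2ε; and (b) the concatenation wu satisfies D_{v,n+s}(wu) < 2ε. -/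
open MeasureTheory

/-!
Appending or prepending a block `t` to `u` never destroys an occurrence of `v` in `u` and creates
at most `|t|` new ones (one per new starting position). Hence the frequency `|x|_v / |x|` of the
extended word moves by at most `|t| / |u|` away from that of `u`, and when `|t| / |u| < ε` the
triangle inequality turns `D_{v,n}(u) < ε` into a discrepancy bound `< 2ε`.
-/

theorem List.take_drop_append_of_add_le_length {α : Type*} (x t : List α) {j k : ℕ}
    (h : j + k ≤ x.length) : ((x ++ t).drop j).take k = (x.drop j).take k := by
  rw [List.drop_append_of_le_length (by omega),
    List.take_append_of_le_length (by simp only [List.length_drop]; omega)]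

theorem occCount_le_length {v : List ℕ} (hv : v ≠ []) (x : List ℕ) :
    occCount x v ≤ x.length := by
  have hrange : occCount x v ≤ x.length + 1 - v.length :=
    (Finset.card_filter_le _ _).trans_eq (Finset.card_range _)
  have hvlen : 1 ≤ v.length := List.length_pos_iff.mpr hv
  omega

theorem occCount_le_occCount_append (x t v : List ℕ) :
    occCount x v ≤ occCount (x ++ t) v := by
  refine Finset.card_le_card fun j hj => ?_
  simp only [Finset.mem_filter, Finset.mem_range, List.length_append] at hj ⊢
  exact ⟨by omega, (x.take_drop_append_of_add_le_length t (by omega)).trans hj.2⟩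

theorem occCount_append_le (x t v : List ℕ) :
    occCount (x ++ t) v ≤ occCount x v + t.length := by
  have hsub : ((Finset.range ((x ++ t).length + 1 - v.length)).filter
        fun j => ((x ++ t).drop j).take v.length = v) ⊆
      ((Finset.range (x.length + 1 - v.length)).filter
        fun j => (x.drop j).take v.length = v) ∪
      Finset.Ico (x.length + 1 - v.length) ((x ++ t).length + 1 - v.length) := by
    intro j hj
    simp only [Finset.mem_filter, Finset.mem_range, Finset.mem_union, Finset.mem_Ico,
      List.length_append] at hj ⊢
    by_cases hjx : j < x.length + 1 - v.length
    · exact .inl ⟨hjx, (x.take_drop_append_of_add_le_length t (by omega)).symm.trans hj.2⟩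
    · exact .inr (by omega)
  calc occCount (x ++ t) v
      ≤ occCount x v + (Finset.Ico (x.length + 1 - v.length)
          ((x ++ t).length + 1 - v.length)).card :=
        (Finset.card_le_card hsub).trans (Finset.card_union_le _ _)
    _ ≤ occCount x v + t.length := by
        rw [Nat.card_Ico, List.length_append]
        omega

theorem occCount_le_occCount_prepend (t x v : List ℕ) :
    occCount x v ≤ occCount (t ++ x) v := by
  unfold occCount
  rw [← Finset.card_image_of_injective _ (add_right_injective t.length)]
  refine Finset.card_le_card fun j hj => ?_
  simp only [Finset.mem_image, Finset.mem_filter, Finset.mem_range, List.length_append]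
    at hj ⊢
  obtain ⟨i, ⟨hi, hocc⟩, rfl⟩ := hj
  rw [List.drop_length_add_append]
  exact ⟨by omega, hocc⟩

theorem occCount_prepend_le (t x v : List ℕ) :
    occCount (t ++ x) v ≤ occCount x v + t.length := by
  have hsub : ((Finset.range ((t ++ x).length + 1 - v.length)).filter
        fun j => ((t ++ x).drop j).take v.length = v) ⊆
      (((Finset.range (x.length + 1 - v.length)).filter
        fun j => (x.drop j).take v.length = v).image (t.length + ·)) ∪
      Finset.range t.length := by
    intro j hj
    simp only [Finset.mem_filter, Finset.mem_range, Finset.mem_union, Finset.mem_image,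
      List.length_append] at hj ⊢
    by_cases hjt : j < t.length
    · exact .inr hjt
    · obtain ⟨hj, hocc⟩ := hj
      rw [show j = t.length + (j - t.length) by omega, List.drop_length_add_append] at hocc
      exact .inl ⟨j - t.length, ⟨by omega, hocc⟩, by omega⟩
  calc occCount (t ++ x) v
      ≤ occCount x v + (Finset.range t.length).card := by
        refine (Finset.card_le_card hsub).trans ((Finset.card_union_le _ _).trans ?_)
        rw [Finset.card_image_of_injective _ (add_right_injective t.length)]
        rfl
    _ = occCount x v + t.length := by rw [Finset.card_range]

theorem abs_div_add_sub_div_le {K : Type*} [Field K] [LinearOrder K] [IsStrictOrderedRing K]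
    {a b d n : K} (hn : 0 < n) (ha₀ : 0 ≤ a) (han : a ≤ n) (hab : a ≤ b) (hbd : b ≤ a + d) :
    |b / (n + d) - a / n| ≤ d / n := by
  have hd : 0 ≤ d := by linarith
  have hnd : 0 < n + d := by linarith
  have hnum : |b * n - (n + d) * a| ≤ d * (n + d) := by
    rw [abs_le]
    constructor <;> nlinarith [mul_le_mul_of_nonneg_left han hd,
      mul_le_mul_of_nonneg_left (sub_nonneg.mpr hab) hn.le,
      mul_le_mul_of_nonneg_left (sub_le_iff_le_add'.mpr hbd) hn.le]
  rw [div_sub_div _ _ hnd.ne' hn.ne', abs_div, abs_of_pos (mul_pos hnd hn),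
    div_le_div_iff₀ (mul_pos hnd hn) hn]
  calc _ ≤ d * (n + d) * n := by gcongr
    _ = d * ((n + d) * n) := by ring

theorem cfDisc_le_of_occCount_near {u x v : List ℕ} {d : ℕ} (hun : u ≠ []) (hvn : v ≠ [])
    (hlen : x.length = u.length + d) (hlo : occCount u v ≤ occCount x v)
    (hhi : occCount x v ≤ occCount u v + d) :
    cfDisc v x ≤ cfDisc v u + d / u.length := by
  have hn : (0 : ℝ) < u.length := by exact_mod_cast List.length_pos_iff.mpr hun
  have hfreq := abs_div_add_sub_div_le hn (Nat.cast_nonneg _)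
    (Nat.cast_le.mpr (occCount_le_length hvn u)) (Nat.cast_le.mpr hlo)
    (by exact_mod_cast hhi : (occCount x v : ℝ) ≤ occCount u v + d)
  unfold cfDisc
  rw [hlen, Nat.cast_add]
  calc _ ≤ _ := abs_sub_le _ ((occCount u v : ℝ) / u.length) _
    _ ≤ _ := by linarith

theorem cfDisc_append_le {u v : List ℕ} (hun : u ≠ []) (hvn : v ≠ []) (t : List ℕ) :
    cfDisc v (u ++ t) ≤ cfDisc v u + t.length / u.length :=
  cfDisc_le_of_occCount_near hun hvn (List.length_append ..)
    (occCount_le_occCount_append u t v) (occCount_append_le u t v)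

theorem cfDisc_prepend_le {u v : List ℕ} (hun : u ≠ []) (hvn : v ≠ []) (t : List ℕ) :
    cfDisc v (t ++ u) ≤ cfDisc v u + t.length / u.length :=
  cfDisc_le_of_occCount_near hun hvn (by rw [List.length_append, Nat.add_comm])
    (occCount_le_occCount_prepend t u v) (occCount_prepend_le t u v)

theorem cfDisc_append_small_general (u w v : List ℕ) (ε : ℝ)
    (hun : u ≠ []) (hvn : v ≠ [])
    (h1 : cfDisc v u < ε)
    (h2 : (w.length : ℝ) / (u.length : ℝ) < ε) :
    (∀ ℓ : ℕ, 1 ≤ ℓ → ℓ ≤ w.length →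
        cfDisc v ((u ++ w).take (u.length + ℓ)) < 2 * ε) ∧
      cfDisc v (w ++ u) < 2 * ε := by
  refine ⟨fun ℓ _ _ => ?_, by linarith [cfDisc_prepend_le hun hvn w]⟩
  have hprefix : ((w.take ℓ).length : ℝ) / u.length ≤ w.length / u.length := by
    gcongr
    exact List.length_take_le' _ _
  rw [List.take_length_add_append]
  linarith [cfDisc_append_le hun hvn (w.take ℓ)]

theorem cfDisc_append_small (u w v : List ℕ) (ε : ℝ)
    (hu : ∀ x ∈ u, 0 < x) (hw : ∀ x ∈ w, 0 < x) (hv : ∀ x ∈ v, 0 < x)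
    (hun : u ≠ []) (hwn : w ≠ []) (hvn : v ≠ [])
    (hε0 : 0 < ε) (hε1 : ε < 1)
    (h1 : cfDisc v u < ε)
    (h2 : (w.length : ℝ) / (u.length : ℝ) < ε) :
    (∀ ℓ : ℕ, 1 ≤ ℓ → ℓ ≤ w.length →
        cfDisc v ((u ++ w).take (u.length + ℓ)) < 2 * ε) ∧
      cfDisc v (w ++ u) < 2 * ε :=
  cfDisc_append_small_general u w v ε hun hvn h1 h2
end

section
/- Fix a base b ≥ 2 and a block length k. For every real ε with 6/k ≤ ε ≤ 1/b, the number of blocks of length k over the alphabet {0,...,b−1} whose simple b-ary discrepancy is at least ε is at most 2·b^{k+1}·e^{−b ε² k / 6}. -/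
open Finset

-- quadratic bounds on exp for |x| ≤ 1
lemma exp_le_quad {x : ℝ} (h0 : 0 ≤ x) (h1 : x ≤ 1) : Real.exp x ≤ 1 + x + x ^ 2 := by
  have hx : |x| ≤ 1 := by rwa [abs_of_nonneg h0]
  have := Real.exp_bound hx (n := 2) (by norm_num)
  have h := (abs_sub_le_iff.1 this).1
  have hs : ∑ m ∈ range 2, x ^ m / m.factorial = 1 + x := by
    simp [Finset.sum_range_succ]
  rw [hs, abs_of_nonneg h0] at h
  norm_num [Nat.factorial] at h
  nlinarith [sq_nonneg x]

lemma exp_neg_le_quad {x : ℝ} (h0 : 0 ≤ x) (h1 : x ≤ 1) : Real.exp (-x) ≤ 1 - x + x ^ 2 := by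
  have hx : |(-x)| ≤ 1 := by rwa [abs_neg, abs_of_nonneg h0]
  have := Real.exp_bound hx (n := 2) (by norm_num)
  have h := (abs_sub_le_iff.1 this).1
  have hs : ∑ m ∈ range 2, (-x) ^ m / m.factorial = 1 - x := by
    simp [Finset.sum_range_succ]; ring
  rw [hs, abs_neg, abs_of_nonneg h0] at h
  norm_num [Nat.factorial] at h
  nlinarith [sq_nonneg x]

-- the mgf-like sum
lemma sum_exp_count (b k : ℕ) (s : Fin b) (t : ℝ) :
    ∑ u : Fin k → Fin b,
        Real.exp (t * ((Finset.univ.filter (fun j : Fin k => u j = s)).card : ℝ))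
      = (Real.exp t + ((b : ℝ) - 1)) ^ k := by
  have key : ∀ u : Fin k → Fin b,
      Real.exp (t * ((Finset.univ.filter (fun j : Fin k => u j = s)).card : ℝ))
        = ∏ j : Fin k, (if u j = s then Real.exp t else 1) := by
    intro u
    rw [Finset.card_filter]
    push_cast
    rw [Finset.mul_sum, Real.exp_sum]
    refine Finset.prod_congr rfl fun j _ => ?_
    split_ifs <;> simp
  simp_rw [key]
  have := Finset.sum_prod_piFinset (Finset.univ : Finset (Fin b))
      (fun (_ : Fin k) (a : Fin b) => if a = s then Real.exp t else 1)
  rw [← Fintype.piFinset_univ] at *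
  rw [this]
  have hsum : ∑ a : Fin b, (if a = s then Real.exp t else 1) = Real.exp t + ((b : ℝ) - 1) := by
    have : ∀ a : Fin b, (if a = s then Real.exp t else 1)
        = (if a = s then Real.exp t - 1 else 0) + 1 := by
      intro a; split_ifs <;> ring
    simp_rw [this, Finset.sum_add_distrib, Finset.sum_ite_eq', Finset.mem_univ, if_true,
      Finset.sum_const, Finset.card_univ, Fintype.card_fin, nsmul_eq_mul, mul_one]
    ring
  rw [Finset.prod_const, hsum, Finset.card_univ, Fintype.card_fin]

-- Markov / counting bound
lemma markov_count {α : Type*} [Fintype α] (p : α → Prop) [DecidablePred p]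
    (f : α → ℝ) (hf : ∀ a, 0 ≤ f a) (c : ℝ) (hc : 0 < c)
    (h : ∀ a, p a → c ≤ f a) :
    ((Finset.univ.filter p).card : ℝ) ≤ (∑ a, f a) / c := by
  rw [le_div_iff₀ hc]
  calc ((Finset.univ.filter p).card : ℝ) * c
      = ∑ _a ∈ Finset.univ.filter p, c := by rw [Finset.sum_const, nsmul_eq_mul]
    _ ≤ ∑ a ∈ Finset.univ.filter p, f a :=
        Finset.sum_le_sum fun a ha => h a (Finset.mem_filter.1 ha).2
    _ ≤ ∑ a, f a :=
        Finset.sum_le_sum_of_subset_of_nonneg (Finset.filter_subset _ _)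
          (fun a _ _ => hf a)

lemma tail_up (b k : ℕ) (hb : 2 ≤ b) (hk : 1 ≤ k) (ε : ℝ) (hε : 0 < ε)
    (h2 : ε ≤ 1 / (b : ℝ)) (s : Fin b)
    (p : (Fin k → Fin b) → Prop) [DecidablePred p]
    (hp : ∀ u, p u →
      ε ≤ ((Finset.univ.filter (fun j : Fin k => u j = s)).card : ℝ) / (k : ℝ) - 1 / (b : ℝ)) :
    ((Finset.univ.filter p).card : ℝ)
      ≤ (b : ℝ) ^ k * Real.exp (-((b : ℝ) * ε ^ 2 * (k : ℝ)) / 6) := by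
  have hbR : (2 : ℝ) ≤ (b : ℝ) := by exact_mod_cast hb
  have hb0 : (0 : ℝ) < b := by linarith
  have hk0 : (0 : ℝ) < k := by exact_mod_cast hk
  set t : ℝ := (b : ℝ) * ε / 2 with ht_def
  have hbε : (b : ℝ) * ε ≤ 1 := by
    calc (b : ℝ) * ε ≤ (b : ℝ) * (1 / b) := by
          exact mul_le_mul_of_nonneg_left h2 hb0.le
      _ = 1 := by field_simp
  have ht0 : 0 ≤ t := by positivity
  have ht1 : t ≤ 1 := by rw [ht_def]; linarith
  set θ : ℝ := t * ((k : ℝ) * (1 / b + ε)) with hθ_def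
  set N : (Fin k → Fin b) → ℝ :=
    fun u => ((Finset.univ.filter (fun j : Fin k => u j = s)).card : ℝ) with hN_def
  have step1 : ((Finset.univ.filter p).card : ℝ)
      ≤ Real.exp (-θ) * (Real.exp t + ((b : ℝ) - 1)) ^ k := by
    have hm := markov_count p (fun u => Real.exp (t * N u))
      (fun u => (Real.exp_pos _).le) (Real.exp θ) (Real.exp_pos _) ?_
    · rw [hN_def] at hm
      rw [sum_exp_count b k s t] at hm
      calc ((Finset.univ.filter p).card : ℝ)
          ≤ (Real.exp t + ((b : ℝ) - 1)) ^ k / Real.exp θ := hm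
        _ = Real.exp (-θ) * (Real.exp t + ((b : ℝ) - 1)) ^ k := by
            rw [Real.exp_neg θ, div_eq_mul_inv, mul_comm]
    · intro u hu
      apply Real.exp_le_exp.2
      have h := hp u hu
      have hNk : (k : ℝ) * (1 / b + ε) ≤ N u := by
        have h' : 1 / (b : ℝ) + ε ≤ N u / k := by linarith
        have := (le_div_iff₀ hk0).1 h'
        linarith
      exact mul_le_mul_of_nonneg_left hNk ht0
  have hbase : Real.exp t + ((b : ℝ) - 1) ≤ (b : ℝ) * Real.exp ((t + t ^ 2) / b) := by
    have h3 := exp_le_quad ht0 ht1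
    have h4 := Real.add_one_le_exp ((t + t ^ 2) / b)
    have h5 : Real.exp t + ((b : ℝ) - 1) ≤ (b : ℝ) * (1 + (t + t ^ 2) / b) := by
      have : (b : ℝ) * (1 + (t + t ^ 2) / b) = b + (t + t ^ 2) := by field_simp
      rw [this]; linarith
    calc Real.exp t + ((b : ℝ) - 1) ≤ (b : ℝ) * (1 + (t + t ^ 2) / b) := h5
      _ ≤ (b : ℝ) * Real.exp ((t + t ^ 2) / b) :=
          mul_le_mul_of_nonneg_left (by linarith) hb0.le
  have hpow : (Real.exp t + ((b : ℝ) - 1)) ^ k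
      ≤ ((b : ℝ) * Real.exp ((t + t ^ 2) / b)) ^ k := by
    apply pow_le_pow_left₀ _ hbase
    have := (Real.exp_pos t).le
    linarith
  have step2 : Real.exp (-θ) * (Real.exp t + ((b : ℝ) - 1)) ^ k
      ≤ (b : ℝ) ^ k * Real.exp ((k : ℝ) * ((t + t ^ 2) / b) - θ) := by
    calc Real.exp (-θ) * (Real.exp t + ((b : ℝ) - 1)) ^ k
        ≤ Real.exp (-θ) * ((b : ℝ) * Real.exp ((t + t ^ 2) / b)) ^ k :=
          mul_le_mul_of_nonneg_left hpow (Real.exp_pos _).le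
      _ = (b : ℝ) ^ k * Real.exp ((k : ℝ) * ((t + t ^ 2) / b) - θ) := by
          rw [mul_pow, ← Real.exp_nat_mul, sub_eq_add_neg, Real.exp_add]
          ring
  have hexp : (k : ℝ) * ((t + t ^ 2) / b) - θ ≤ -((b : ℝ) * ε ^ 2 * (k : ℝ)) / 6 := by
    have heq : (k : ℝ) * ((t + t ^ 2) / b) - θ = -((k : ℝ) * b * ε ^ 2) / 4 := by
      rw [hθ_def, ht_def]; field_simp; ring
    rw [heq]
    have hpos : 0 ≤ (k : ℝ) * b * ε ^ 2 := by positivity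
    nlinarith
  calc ((Finset.univ.filter p).card : ℝ)
      ≤ Real.exp (-θ) * (Real.exp t + ((b : ℝ) - 1)) ^ k := step1
    _ ≤ (b : ℝ) ^ k * Real.exp ((k : ℝ) * ((t + t ^ 2) / b) - θ) := step2
    _ ≤ (b : ℝ) ^ k * Real.exp (-((b : ℝ) * ε ^ 2 * (k : ℝ)) / 6) := by
        apply mul_le_mul_of_nonneg_left (Real.exp_le_exp.2 hexp) (by positivity)

lemma tail_dn (b k : ℕ) (hb : 2 ≤ b) (hk : 1 ≤ k) (ε : ℝ) (hε : 0 < ε)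
    (h2 : ε ≤ 1 / (b : ℝ)) (s : Fin b)
    (p : (Fin k → Fin b) → Prop) [DecidablePred p]
    (hp : ∀ u, p u →
      ε ≤ 1 / (b : ℝ) - ((Finset.univ.filter (fun j : Fin k => u j = s)).card : ℝ) / (k : ℝ)) :
    ((Finset.univ.filter p).card : ℝ)
      ≤ (b : ℝ) ^ k * Real.exp (-((b : ℝ) * ε ^ 2 * (k : ℝ)) / 6) := by
  have hbR : (2 : ℝ) ≤ (b : ℝ) := by exact_mod_cast hb
  have hb0 : (0 : ℝ) < b := by linarith
  have hk0 : (0 : ℝ) < k := by exact_mod_cast hk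
  set t : ℝ := (b : ℝ) * ε / 2 with ht_def
  have hbε : (b : ℝ) * ε ≤ 1 := by
    calc (b : ℝ) * ε ≤ (b : ℝ) * (1 / b) := by
          exact mul_le_mul_of_nonneg_left h2 hb0.le
      _ = 1 := by field_simp
  have ht0 : 0 ≤ t := by positivity
  have ht1 : t ≤ 1 := by rw [ht_def]; linarith
  set θ : ℝ := -t * ((k : ℝ) * (1 / b - ε)) with hθ_def
  set N : (Fin k → Fin b) → ℝ :=
    fun u => ((Finset.univ.filter (fun j : Fin k => u j = s)).card : ℝ) with hN_def
  have step1 : ((Finset.univ.filter p).card : ℝ)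
      ≤ Real.exp (-θ) * (Real.exp (-t) + ((b : ℝ) - 1)) ^ k := by
    have hm := markov_count p (fun u => Real.exp (-t * N u))
      (fun u => (Real.exp_pos _).le) (Real.exp θ) (Real.exp_pos _) ?_
    · rw [hN_def] at hm
      rw [sum_exp_count b k s (-t)] at hm
      calc ((Finset.univ.filter p).card : ℝ)
          ≤ (Real.exp (-t) + ((b : ℝ) - 1)) ^ k / Real.exp θ := hm
        _ = Real.exp (-θ) * (Real.exp (-t) + ((b : ℝ) - 1)) ^ k := by
            rw [Real.exp_neg θ, div_eq_mul_inv, mul_comm]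
    · intro u hu
      apply Real.exp_le_exp.2
      have h := hp u hu
      have hNk : N u ≤ (k : ℝ) * (1 / b - ε) := by
        have h' : N u / k ≤ 1 / (b : ℝ) - ε := by linarith
        have := (div_le_iff₀ hk0).1 h'
        linarith
      have := mul_le_mul_of_nonneg_left hNk ht0
      rw [hθ_def]
      nlinarith
  have hbase : Real.exp (-t) + ((b : ℝ) - 1) ≤ (b : ℝ) * Real.exp ((t ^ 2 - t) / b) := by
    have h3 := exp_neg_le_quad ht0 ht1
    have h4 := Real.add_one_le_exp ((t ^ 2 - t) / b)
    have h5 : Real.exp (-t) + ((b : ℝ) - 1) ≤ (b : ℝ) * (1 + (t ^ 2 - t) / b) := by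
      have : (b : ℝ) * (1 + (t ^ 2 - t) / b) = b + (t ^ 2 - t) := by field_simp
      rw [this]; linarith
    calc Real.exp (-t) + ((b : ℝ) - 1) ≤ (b : ℝ) * (1 + (t ^ 2 - t) / b) := h5
      _ ≤ (b : ℝ) * Real.exp ((t ^ 2 - t) / b) :=
          mul_le_mul_of_nonneg_left (by linarith) hb0.le
  have hpow : (Real.exp (-t) + ((b : ℝ) - 1)) ^ k
      ≤ ((b : ℝ) * Real.exp ((t ^ 2 - t) / b)) ^ k := by
    apply pow_le_pow_left₀ _ hbase
    have := (Real.exp_pos (-t)).le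
    linarith
  have step2 : Real.exp (-θ) * (Real.exp (-t) + ((b : ℝ) - 1)) ^ k
      ≤ (b : ℝ) ^ k * Real.exp ((k : ℝ) * ((t ^ 2 - t) / b) - θ) := by
    calc Real.exp (-θ) * (Real.exp (-t) + ((b : ℝ) - 1)) ^ k
        ≤ Real.exp (-θ) * ((b : ℝ) * Real.exp ((t ^ 2 - t) / b)) ^ k :=
          mul_le_mul_of_nonneg_left hpow (Real.exp_pos _).le
      _ = (b : ℝ) ^ k * Real.exp ((k : ℝ) * ((t ^ 2 - t) / b) - θ) := by
          rw [mul_pow, ← Real.exp_nat_mul,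
            sub_eq_add_neg ((k : ℝ) * ((t ^ 2 - t) / (b : ℝ))) θ, Real.exp_add]
          ring
  have hexp : (k : ℝ) * ((t ^ 2 - t) / b) - θ ≤ -((b : ℝ) * ε ^ 2 * (k : ℝ)) / 6 := by
    have heq : (k : ℝ) * ((t ^ 2 - t) / b) - θ = -((k : ℝ) * b * ε ^ 2) / 4 := by
      rw [hθ_def, ht_def]; field_simp; ring
    rw [heq]
    have hpos : 0 ≤ (k : ℝ) * b * ε ^ 2 := by positivity
    nlinarith
  calc ((Finset.univ.filter p).card : ℝ)
      ≤ Real.exp (-θ) * (Real.exp (-t) + ((b : ℝ) - 1)) ^ k := step1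
    _ ≤ (b : ℝ) ^ k * Real.exp ((k : ℝ) * ((t ^ 2 - t) / b) - θ) := step2
    _ ≤ (b : ℝ) ^ k * Real.exp (-((b : ℝ) * ε ^ 2 * (k : ℝ)) / 6) := by
        apply mul_le_mul_of_nonneg_left (Real.exp_le_exp.2 hexp) (by positivity)

open Classical in
theorem count_large_discrepancy_blocks (b k : ℕ) (hb : 2 ≤ b) (hk : 1 ≤ k) (ε : ℝ)
    (h1 : 6 / (k : ℝ) ≤ ε) (h2 : ε ≤ 1 / (b : ℝ)) :
    ((Finset.univ.filter (fun u : Fin k → Fin b =>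
          ∃ s < b, ε ≤
            |((Finset.univ.filter (fun j : Fin k => (u j : ℕ) = s)).card : ℝ) / (k : ℝ)
              - 1 / (b : ℝ)|)).card : ℝ)
      ≤ 2 * (b : ℝ) ^ (k + 1) * Real.exp (-((b : ℝ) * ε ^ 2 * (k : ℝ)) / 6) := by
  have hk0 : (0 : ℝ) < k := by exact_mod_cast hk
  have hε : 0 < ε := lt_of_lt_of_le (by positivity) h1
  -- the per-symbol "bad" sets (as a ℕ-indexed family)
  set P : ℕ → (Fin k → Fin b) → Prop := fun s u =>
    (ε ≤ ((Finset.univ.filter (fun j : Fin k => (u j : ℕ) = s)).card : ℝ) / (k : ℝ) - 1 / (b : ℝ))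
    ∨ (ε ≤ 1 / (b : ℝ) - ((Finset.univ.filter (fun j : Fin k => (u j : ℕ) = s)).card : ℝ) / (k : ℝ))
    with hP
  have hsub : (Finset.univ.filter (fun u : Fin k → Fin b =>
          ∃ s < b, ε ≤
            |((Finset.univ.filter (fun j : Fin k => (u j : ℕ) = s)).card : ℝ) / (k : ℝ)
              - 1 / (b : ℝ)|))
      ⊆ (Finset.range b).biUnion (fun s => Finset.univ.filter (P s)) := by
    intro u hu
    simp only [Finset.mem_filter, Finset.mem_univ, true_and] at hu
    obtain ⟨s, hs, habs⟩ := hu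
    refine Finset.mem_biUnion.2 ⟨s, Finset.mem_range.2 hs, ?_⟩
    simp only [Finset.mem_filter, Finset.mem_univ, true_and, hP]
    rcases le_abs.1 habs with h | h
    · exact Or.inl h
    · exact Or.inr (by linarith)
  have hcard : (Finset.univ.filter (fun u : Fin k → Fin b =>
          ∃ s < b, ε ≤
            |((Finset.univ.filter (fun j : Fin k => (u j : ℕ) = s)).card : ℝ) / (k : ℝ)
              - 1 / (b : ℝ)|)).card
      ≤ ∑ s ∈ Finset.range b, (Finset.univ.filter (P s)).card :=
    (Finset.card_le_card hsub).trans Finset.card_biUnion_le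
  have hone : ∀ s ∈ Finset.range b, ((Finset.univ.filter (P s)).card : ℝ)
      ≤ 2 * (b : ℝ) ^ k * Real.exp (-((b : ℝ) * ε ^ 2 * (k : ℝ)) / 6) := by
    intro s hs
    have hsb : s < b := Finset.mem_range.1 hs
    set s' : Fin b := ⟨s, hsb⟩ with hs'
    have hNs : ∀ u : Fin k → Fin b,
        (Finset.univ.filter (fun j : Fin k => (u j : ℕ) = s)).card
          = (Finset.univ.filter (fun j : Fin k => u j = s')).card := by
      intro u
      congr 1
      apply Finset.filter_congr
      intro j _
      simp [hs', Fin.ext_iff]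
    have hsplit : (Finset.univ.filter (P s)).card
        ≤ (Finset.univ.filter (fun u : Fin k → Fin b =>
              ε ≤ ((Finset.univ.filter (fun j : Fin k => (u j : ℕ) = s)).card : ℝ) / (k : ℝ)
                - 1 / (b : ℝ))).card
          + (Finset.univ.filter (fun u : Fin k → Fin b =>
              ε ≤ 1 / (b : ℝ)
                - ((Finset.univ.filter (fun j : Fin k => (u j : ℕ) = s)).card : ℝ) / (k : ℝ))).card := by
      simp only [hP]
      rw [Finset.filter_or]
      exact Finset.card_union_le _ _
    have hup := tail_up b k hb hk ε hε h2 s'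
      (fun u : Fin k → Fin b =>
        ε ≤ ((Finset.univ.filter (fun j : Fin k => (u j : ℕ) = s)).card : ℝ) / (k : ℝ)
          - 1 / (b : ℝ))
      (fun u h => by rw [← hNs u]; exact h)
    have hdn := tail_dn b k hb hk ε hε h2 s'
      (fun u : Fin k → Fin b =>
        ε ≤ 1 / (b : ℝ)
          - ((Finset.univ.filter (fun j : Fin k => (u j : ℕ) = s)).card : ℝ) / (k : ℝ))
      (fun u h => by rw [← hNs u]; exact h)
    have := hsplit
    have hcast : ((Finset.univ.filter (P s)).card : ℝ)
        ≤ ((Finset.univ.filter (fun u : Fin k → Fin b =>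
              ε ≤ ((Finset.univ.filter (fun j : Fin k => (u j : ℕ) = s)).card : ℝ) / (k : ℝ)
                - 1 / (b : ℝ))).card : ℝ)
          + ((Finset.univ.filter (fun u : Fin k → Fin b =>
              ε ≤ 1 / (b : ℝ)
                - ((Finset.univ.filter (fun j : Fin k => (u j : ℕ) = s)).card : ℝ) / (k : ℝ))).card : ℝ) := by
      exact_mod_cast hsplit
    calc ((Finset.univ.filter (P s)).card : ℝ)
        ≤ _ + _ := hcast
      _ ≤ (b : ℝ) ^ k * Real.exp (-((b : ℝ) * ε ^ 2 * (k : ℝ)) / 6)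
          + (b : ℝ) ^ k * Real.exp (-((b : ℝ) * ε ^ 2 * (k : ℝ)) / 6) := add_le_add hup hdn
      _ = 2 * (b : ℝ) ^ k * Real.exp (-((b : ℝ) * ε ^ 2 * (k : ℝ)) / 6) := by ring
  calc ((Finset.univ.filter (fun u : Fin k → Fin b =>
          ∃ s < b, ε ≤
            |((Finset.univ.filter (fun j : Fin k => (u j : ℕ) = s)).card : ℝ) / (k : ℝ)
              - 1 / (b : ℝ)|)).card : ℝ)
      ≤ ((∑ s ∈ Finset.range b, (Finset.univ.filter (P s)).card : ℕ) : ℝ) := by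
        exact_mod_cast hcard
    _ = ∑ s ∈ Finset.range b, ((Finset.univ.filter (P s)).card : ℝ) := by push_cast; rfl
    _ ≤ ∑ s ∈ Finset.range b, (2 * (b : ℝ) ^ k * Real.exp (-((b : ℝ) * ε ^ 2 * (k : ℝ)) / 6)) :=
        Finset.sum_le_sum hone
    _ = 2 * (b : ℝ) ^ (k + 1) * Real.exp (-((b : ℝ) * ε ^ 2 * (k : ℝ)) / 6) := by
        rw [Finset.sum_const, Finset.card_range, nsmul_eq_mul, pow_succ]
        ring
end

section
/- Let I = I_{[a_1,...,a_r]} be a cf-ary interval and b = (b_1,...,b_k) a block of positive integers. Assume the unconditioned large deviation bound: for all n and δ > 0, μ({x ∈ (0,1) : |(1/n) Σ_{i=0}^{n−1} 𝟙_{I_b}(T^i x) − μ(I_b)| > δ}) ≤ 2 M e^{−δ² n/(2M)}, where M = min{m ∈ ℕ : (log 2)·2^{−m+k} ≤ δ²/2}. Then the Lebesgue measure of the set of x ∈ I such that |(1/n) Σ_{i=0}^{n−1} 𝟙_{I_b}(T^{r+i} x) − μ(I_b)| > δ is at most 6 M e^{−δ² n/(2M)} · |I|. -/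
open MeasureTheory

/-- The Gauss map `T(x) = 1/x - ⌊1/x⌋`, with `T(0) = 0`. -/
noncomputable def gaussMap (x : ℝ) : ℝ := if x = 0 then 0 else 1 / x - ⌊1 / x⌋

/-- `M(δ,k) = min { m ∈ ℕ : (log 2)·2^{-m+k} ≤ δ²/2 }`. -/
noncomputable def Mconst (δ : ℝ) (k : ℕ) : ℕ :=
  sInf {m : ℕ | Real.log 2 * (2 : ℝ) ^ ((k : ℤ) - (m : ℤ)) ≤ δ ^ 2 / 2}

/-!
The map `ψ(y) = [a₁, …, a_r + y] = (p + p' y) / (q + q' y)` sends `(0, 1)` onto `I_a` and inverts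
`T^r` there, so the conditional deviation set lies in the `ψ`-image of the unconditioned one, `S`.
Since `|p q' - p' q| = 1` and `q' ≤ q`, `ψ` is `1/q²`-Lipschitz while `|I_a| = 1/(q (q + q'))`
is at least `1/(2q²)`; hence the image has measure at most `2 |I_a| |S|`. Finally the density
`1/(1 + x)` is at least `1/2` on `(0, 1)`, so `|S| ≤ 2 log 2 · μ(S)`, and `8 log 2 < 6`.
-/

open Set

lemma measurable_gaussMap : Measurable gaussMap := by
  have h_inv : Measurable fun x : ℝ => 1 / x := measurable_const.div measurable_id
  exact Measurable.ite (measurableSet_singleton 0) measurable_const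
    (h_inv.sub (measurable_from_top.comp h_inv.floor))

lemma gaussMap_one_div_add {a : ℕ} (ha : 0 < a) {t : ℝ} (ht : t ∈ Ioo (0 : ℝ) 1) :
    gaussMap (1 / (a + t)) = t := by
  have ha' : (1 : ℝ) ≤ a := by exact_mod_cast ha
  have hfloor : ⌊(a : ℝ) + t⌋ = a := by
    rw [add_comm, Int.floor_add_natCast, Int.floor_eq_zero_iff.2 ⟨ht.1.le, ht.2⟩, zero_add]
  have hne : 1 / ((a : ℝ) + t) ≠ 0 := one_div_ne_zero (by linarith [ht.1])
  rw [gaussMap, if_neg hne, one_div_one_div, hfloor]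
  push_cast
  ring

section Mobius

variable {p p' q q' : ℝ}

lemma mobius_sub_mobius {y z : ℝ} (hy : q + q' * y ≠ 0) (hz : q + q' * z ≠ 0) :
    (p + p' * y) / (q + q' * y) - (p + p' * z) / (q + q' * z)
      = (p' * q - p * q') * (y - z) / ((q + q' * y) * (q + q' * z)) := by
  rw [div_sub_div _ _ hy hz]
  ring

lemma lipschitzOnWith_mobius (hq : 0 < q) (hq' : 0 ≤ q') (hdet : |p * q' - p' * q| = 1) :
    LipschitzOnWith (Real.toNNReal (1 / q ^ 2))
      (fun y => (p + p' * y) / (q + q' * y)) (Ici 0) := by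
  refine LipschitzOnWith.of_dist_le_mul fun y (hy : 0 ≤ y) z (hz : 0 ≤ z) => ?_
  have hqy : q ≤ q + q' * y := le_add_of_nonneg_right (mul_nonneg hq' hy)
  have hqz : q ≤ q + q' * z := le_add_of_nonneg_right (mul_nonneg hq' hz)
  have hdet' : |p' * q - p * q'| = 1 := by rw [← abs_neg, ← hdet]; ring_nf
  have hD : q ^ 2 ≤ (q + q' * y) * (q + q' * z) := by nlinarith
  rw [Real.dist_eq, Real.dist_eq, Real.coe_toNNReal _ (by positivity),
    mobius_sub_mobius (by linarith) (by linarith), abs_div, abs_mul, hdet', one_mul,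
    abs_of_pos (show 0 < (q + q' * y) * (q + q' * z) by positivity), one_div_mul_eq_div]
  exact div_le_div_of_nonneg_left (abs_nonneg _) (by positivity) hD

end Mobius

/-- `cfBranch u y = [u₁, …, uₙ₋₁, uₙ + y]`, the inverse branch of `T^n` onto `I_u`. -/
noncomputable def cfBranch : List ℕ → ℝ → ℝ
  | [], y => y
  | a :: l, y => 1 / (a + cfBranch l y)

lemma cfBranch_zero : ∀ u : List ℕ, cfBranch u 0 = cfVal u
  | [] => rfl
  | a :: l => by rw [cfBranch, cfVal, cfBranch_zero l]

lemma cfBranch_one : ∀ u : List ℕ, u ≠ [] → cfBranch u 1 = cfVal (succLast u)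
  | [], h => absurd rfl h
  | [a], _ => by simp [cfBranch, succLast, cfVal]
  | a :: b :: l, _ => by
    rw [cfBranch, succLast, cfVal, cfBranch_one (b :: l) (List.cons_ne_nil b l)]

lemma cfInterval_eq_Ioo_cfBranch {u : List ℕ} (hu : u ≠ []) :
    cfInterval u = Ioo (min (cfBranch u 0) (cfBranch u 1)) (max (cfBranch u 0) (cfBranch u 1)) := by
  rw [cfInterval, cfBranch_zero, cfBranch_one u hu]

lemma cfBranch_mem_Ioo_and_gaussMap_iterate :
    ∀ {u : List ℕ}, (∀ x ∈ u, 0 < x) → ∀ {y : ℝ}, y ∈ Ioo (0 : ℝ) 1 →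
      cfBranch u y ∈ Ioo (0 : ℝ) 1 ∧ gaussMap^[u.length] (cfBranch u y) = y
  | [], _, _, hy => ⟨hy, rfl⟩
  | a :: l, hu, y, hy => by
    obtain ⟨⟨ht0, ht1⟩, hl⟩ :=
      cfBranch_mem_Ioo_and_gaussMap_iterate (fun x hx => hu x (List.mem_cons_of_mem a hx)) hy
    have ha : (1 : ℝ) ≤ a := by exact_mod_cast hu a List.mem_cons_self
    refine ⟨⟨by rw [cfBranch]; positivity, ?_⟩, ?_⟩
    · rw [cfBranch, div_lt_one (by positivity)]
      linarith
    · rw [List.length_cons, Function.iterate_succ_apply, cfBranch,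
        gaussMap_one_div_add (hu a List.mem_cons_self) ⟨ht0, ht1⟩, hl]

/-- On `[0, ∞)`, `cfBranch u` is the Möbius map `y ↦ (p + p' y) / (q + q' y)` with
`(p, q) = (pₙ, qₙ)` and `(p', q') = (pₙ₋₁, qₙ₋₁)`; the inequality `p' + q' ≤ p + q` is the
invariant that propagates `q' ≤ q` through the recursion. -/
lemma exists_mobius_eq_cfBranch : ∀ {u : List ℕ}, (∀ x ∈ u, 0 < x) →
    ∃ p p' q q' : ℝ, 0 ≤ p ∧ 0 ≤ p' ∧ 0 ≤ q' ∧ 1 ≤ q ∧ q' ≤ q ∧ p' + q' ≤ p + q ∧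
      |p * q' - p' * q| = 1 ∧ ∀ y, 0 ≤ y → cfBranch u y = (p + p' * y) / (q + q' * y)
  | [], _ => ⟨0, 1, 1, 0, by norm_num, by norm_num, by norm_num, by norm_num, by norm_num,
      by norm_num, by norm_num, fun y _ => by simp [cfBranch]⟩
  | a :: l, hu => by
    obtain ⟨p, p', q, q', hp, hp', hq', hq, hq'q, hsum, hdet, hl⟩ :=
      exists_mobius_eq_cfBranch (fun x hx => hu x (List.mem_cons_of_mem a hx))
    have ha : (1 : ℝ) ≤ a := by exact_mod_cast hu a List.mem_cons_self
    refine ⟨q, q', a * q + p, a * q' + p', by linarith, hq', by positivity, by nlinarith,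
      by nlinarith, by nlinarith, by rw [← hdet, ← abs_neg]; ring_nf, fun y hy => ?_⟩
    have hD : 0 < q + q' * y := by positivity
    rw [cfBranch, hl y hy]
    field_simp
    ring

lemma cfInterval_subset_image_cfBranch {u : List ℕ} (hu : ∀ x ∈ u, 0 < x) (hne : u ≠ []) :
    cfInterval u ⊆ cfBranch u '' Ioo 0 1 := by
  obtain ⟨p, p', q, q', -, -, hq', hq, -, -, -, hform⟩ := exists_mobius_eq_cfBranch hu
  have hcont : ContinuousOn (cfBranch u) (Icc 0 1) := by
    refine ContinuousOn.congr ?_ fun y hy => hform y hy.1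
    exact ContinuousOn.div (by fun_prop) (by fun_prop) fun y hy => by nlinarith [hy.1]
  rw [cfInterval_eq_Ioo_cfBranch hne]
  rcases le_total (cfBranch u 0) (cfBranch u 1) with hle | hle
  · rw [min_eq_left hle, max_eq_right hle]
    exact intermediate_value_Ioo zero_le_one hcont
  · rw [min_eq_right hle, max_eq_left hle]
    exact intermediate_value_Ioo' zero_le_one hcont

lemma volume_image_cfBranch_le {u : List ℕ} (hu : ∀ x ∈ u, 0 < x) (hne : u ≠ [])
    {s : Set ℝ} (hs : s ⊆ Ici 0) :
    volume (cfBranch u '' s) ≤ 2 * volume (cfInterval u) * volume s := by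
  obtain ⟨p, p', q, q', -, -, hq', hq, hq'q, -, hdet, hform⟩ := exists_mobius_eq_cfBranch hu
  have hlip : LipschitzOnWith (Real.toNNReal (1 / q ^ 2)) (cfBranch u) (Ici 0) :=
    fun y hy z hz => by
      simpa only [hform y hy, hform z hz] using lipschitzOnWith_mobius (by linarith) hq' hdet hy hz
  have hlen : volume (cfInterval u) = ENNReal.ofReal (1 / (q * (q + q'))) := by
    rw [cfInterval_eq_Ioo_cfBranch hne, Real.volume_Ioo, max_sub_min_eq_abs, hform 0 le_rfl,
      hform 1 zero_le_one, mobius_sub_mobius (by linarith) (by linarith), sub_zero, mul_one,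
      abs_div, abs_sub_comm, hdet, abs_of_pos (by nlinarith)]
    ring_nf
  calc volume (cfBranch u '' s) ≤ ENNReal.ofReal (1 / q ^ 2) * volume s := by
        have := (hlip.mono hs).hausdorffMeasure_image_le zero_le_one
        rwa [hausdorffMeasure_real, ENNReal.rpow_one] at this
    _ ≤ 2 * volume (cfInterval u) * volume s := by
        gcongr
        rw [hlen, ← ENNReal.ofReal_ofNat 2, ← ENNReal.ofReal_mul zero_le_two]
        refine ENNReal.ofReal_le_ofReal ?_
        rw [div_le_iff₀ (by positivity)]
        field_simp
        nlinarith

lemma volume_le_two_mul_log_two_mul_gaussM {s : Set ℝ} (hs : MeasurableSet s)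
    (hs1 : s ⊆ Icc 0 1) : (volume s).toReal ≤ 2 * Real.log 2 * gaussM s := by
  have hfin : volume s ≠ ⊤ := (measure_mono hs1).trans_lt measure_Icc_lt_top |>.ne
  have hint : IntegrableOn (fun x : ℝ => 1 / (1 + x)) s :=
    (ContinuousOn.integrableOn_Icc (continuousOn_const.div (by fun_prop)
      fun x hx => by linarith [hx.1])).mono_set hs1
  have hhalf : (volume s).toReal * (1 / 2) ≤ ∫ x in s, 1 / (1 + x) := by
    rw [← smul_eq_mul, ← measureReal_def, ← setIntegral_const]
    refine setIntegral_mono_on (integrableOn_const hfin) hint hs fun x hx => ?_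
    have := hs1 hx
    rw [div_le_div_iff₀ two_pos (by linarith [this.1])]
    linarith [this.2]
  rw [gaussM, ← mul_assoc, mul_assoc 2, mul_one_div_cancel (Real.log_pos one_lt_two).ne', mul_one]
  linarith

noncomputable def visitFreqDeviation (b : List ℕ) (n : ℕ) (x : ℝ) : ℝ :=
  (∑ i ∈ Finset.range n, (cfInterval b).indicator (fun _ => (1 : ℝ)) (gaussMap^[i] x)) / n
    - gaussM (cfInterval b)

lemma measurable_visitFreqDeviation (b : List ℕ) (n : ℕ) :
    Measurable (visitFreqDeviation b n) :=
  ((Finset.measurable_sum _ fun i _ => (measurable_const.indicator measurableSet_Ioo).comp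
    (measurable_gaussMap.iterate i)).div_const _).sub_const _

lemma setOf_mem_cfInterval_subset_image {u : List ℕ} (hu : ∀ x ∈ u, 0 < x) (hne : u ≠ [])
    (P : ℝ → Prop) :
    {x ∈ cfInterval u | P (gaussMap^[u.length] x)} ⊆ cfBranch u '' {y ∈ Ioo 0 1 | P y} := by
  rintro x ⟨hx, hP⟩
  obtain ⟨y, hy, rfl⟩ := cfInterval_subset_image_cfBranch hu hne hx
  rw [(cfBranch_mem_Ioo_and_gaussMap_iterate hu hy).2] at hP
  exact ⟨y, ⟨hy, hP⟩, rfl⟩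

theorem conditional_large_deviations_general (a b : List ℕ)
    (ha : ∀ x ∈ a, 0 < x) (han : a ≠ [])
    (δ : ℝ) (hδ : 0 < δ) (n : ℕ)
    (H : ∀ m : ℕ, ∀ η : ℝ, 0 < η →
      gaussM {x ∈ Set.Ioo (0 : ℝ) 1 |
          η < |(∑ i ∈ Finset.range m,
              Set.indicator (cfInterval b) (fun _ => (1 : ℝ)) (gaussMap^[i] x)) / (m : ℝ)
            - gaussM (cfInterval b)|}
        ≤ 2 * (Mconst η b.length : ℝ) *
            Real.exp (-(η ^ 2 * (m : ℝ)) / (2 * (Mconst η b.length : ℝ)))) :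
    (volume {x ∈ cfInterval a |
        δ < |(∑ i ∈ Finset.range n,
            Set.indicator (cfInterval b) (fun _ => (1 : ℝ)) (gaussMap^[a.length + i] x)) / (n : ℝ)
          - gaussM (cfInterval b)|}).toReal
      ≤ 6 * (Mconst δ b.length : ℝ) *
          Real.exp (-(δ ^ 2 * (n : ℝ)) / (2 * (Mconst δ b.length : ℝ))) *
          (volume (cfInterval a)).toReal := by
  set S := {y ∈ Ioo (0 : ℝ) 1 | δ < |visitFreqDeviation b n y|}
  set bound := 2 * (Mconst δ b.length : ℝ) *
    Real.exp (-(δ ^ 2 * (n : ℝ)) / (2 * (Mconst δ b.length : ℝ)))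
  have hS : MeasurableSet S :=
    measurableSet_Ioo.inter (measurableSet_lt measurable_const
      (measurable_visitFreqDeviation b n).abs)
  have hS1 : S ⊆ Ioo 0 1 := fun y hy => hy.1
  have hvolS : (volume S).toReal ≤ 2 * Real.log 2 * bound :=
    (volume_le_two_mul_log_two_mul_gaussM hS (hS1.trans Ioo_subset_Icc_self)).trans
      (mul_le_mul_of_nonneg_left (H n δ hδ) (by positivity))
  have hfin : 2 * volume (cfInterval a) * volume S ≠ ⊤ :=
    ENNReal.mul_ne_top (ENNReal.mul_ne_top ENNReal.ofNat_ne_top measure_Ioo_lt_top.ne)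
      ((measure_mono hS1).trans_lt measure_Ioo_lt_top).ne
  calc _ ≤ (2 * volume (cfInterval a) * volume S).toReal := by
        refine ENNReal.toReal_mono hfin ((measure_mono fun x hx => ?_).trans
          (volume_image_cfBranch_le ha han fun y hy => (hS1 hy).1.le))
        refine setOf_mem_cfInterval_subset_image ha han (fun y => δ < |visitFreqDeviation b n y|)
          ⟨hx.1, ?_⟩
        simpa only [visitFreqDeviation, ← Function.iterate_add_apply, add_comm] using hx.2
    _ = 2 * (volume (cfInterval a)).toReal * (volume S).toReal := by
        rw [ENNReal.toReal_mul, ENNReal.toReal_mul, ENNReal.toReal_ofNat]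
    _ ≤ 2 * (volume (cfInterval a)).toReal * (2 * Real.log 2 * bound) := by gcongr
    _ ≤ 3 * bound * (volume (cfInterval a)).toReal := by
        have hbound : 0 ≤ bound * (volume (cfInterval a)).toReal := by positivity
        nlinarith [Real.log_two_lt_d9]
    _ = _ := by ring

theorem conditional_large_deviations (a b : List ℕ)
    (ha : ∀ x ∈ a, 0 < x) (hb : ∀ x ∈ b, 0 < x) (han : a ≠ []) (hbn : b ≠ [])
    (δ : ℝ) (hδ : 0 < δ) (n : ℕ) (hn : 1 ≤ n)
    (H : ∀ m : ℕ, ∀ η : ℝ, 0 < η →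
      gaussM {x ∈ Set.Ioo (0 : ℝ) 1 |
          η < |(∑ i ∈ Finset.range m,
              Set.indicator (cfInterval b) (fun _ => (1 : ℝ)) (gaussMap^[i] x)) / (m : ℝ)
            - gaussM (cfInterval b)|}
        ≤ 2 * (Mconst η b.length : ℝ) *
            Real.exp (-(η ^ 2 * (m : ℝ)) / (2 * (Mconst η b.length : ℝ)))) :
    (volume {x ∈ cfInterval a |
        δ < |(∑ i ∈ Finset.range n,
            Set.indicator (cfInterval b) (fun _ => (1 : ℝ)) (gaussMap^[a.length + i] x)) / (n : ℝ)
          - gaussM (cfInterval b)|}).toReal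
      ≤ 6 * (Mconst δ b.length : ℝ) *
          Real.exp (-(δ ^ 2 * (n : ℝ)) / (2 * (Mconst δ b.length : ℝ))) *
          (volume (cfInterval a)).toReal :=
  conditional_large_deviations_general a b ha han δ hδ n H
end
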